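/- arXiv:1707.02580 — 3 statements merged into one kernel-verified Lean document; each statement's English description precedes it below -/
import Mathlib

section
/- Suppose p ≥ 5. If (g,[p]) is a restricted Lie algebra over k, then the quotient restricted Lie algebra g/C(g) is admissible, i.e., N_3(g/C(g)) ⊆ V(g/C(g)) and exp(N_3(g/C(g))) ⊆ Aut_p(g/C(g)). -/
noncomputable section

namespace ElemAb

variable (p : ℕ) (k : Type) [Field k]

/-- The algebra of polynomial functions on a `k`-vector space `V`: the subalgebra of
`V → k` generated by the linear functionals. -/
def polyFuns (V : Type) [AddCommGroup V] [Module k V] : Subalgebra k (V → k) :=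
  Algebra.adjoin k {f : V → k | ∃ φ : V →ₗ[k] k, f = ⇑φ}

/-- The Zariski topology on a `k`-vector space: the topology generated by the complements of
zero sets of polynomial functions. -/
def zar (V : Type) [AddCommGroup V] [Module k V] : TopologicalSpace V :=
  TopologicalSpace.generateFrom {U | ∃ f ∈ polyFuns k V, U = {x | f x ≠ 0}}

variable (L : Type) [LieRing L] [LieAlgebra k L]

/-- A restricted Lie algebra structure (`p`-map) on the Lie algebra `L`:  a map
`x ↦ x^[p]` having the formal properties of a `p`-th power map, namely
`(t • x)^[p] = t^p • x^[p]`, additivity on commuting elements (and, in general, additivity up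
to a correction term lying in the subalgebra generated by the two elements), and
`ad (x^[p]) = (ad x)^p`. -/
structure pStructure : Type where
  pmap : L → L
  pmap_smul : ∀ (t : k) (x : L), pmap (t • x) = t ^ p • pmap x
  pmap_add_of_comm : ∀ x y : L, ⁅x, y⁆ = 0 → pmap (x + y) = pmap x + pmap y
  pmap_add_mem : ∀ x y : L, pmap (x + y) - pmap x - pmap y ∈ LieSubalgebra.lieSpan k L {x, y}
  ad_pmap : ∀ x y : L, ⁅pmap x, y⁆ = ((LieAlgebra.ad k L x) ^ p) y

variable {p k L}

/-- The (restricted) nullcone `V(g) = {x | x^[p] = 0}`. -/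
def pStructure.null (P : pStructure p k L) : Set L := {x | P.pmap x = 0}

/-- A submodule is an elementary abelian subalgebra if it is abelian (hence a subalgebra) and
the `p`-map vanishes on it. -/
def pStructure.IsElemAbelian (P : pStructure p k L) (e : Submodule k L) : Prop :=
  (∀ x ∈ e, ∀ y ∈ e, ⁅x, y⁆ = (0 : L)) ∧ ∀ x ∈ e, P.pmap x = 0

/-- `E(r, g)`: the `r`-dimensional elementary abelian subalgebras contained in the carrier
set `g` (take `g = Set.univ` for the whole algebra), as a set of submodules. -/
def pStructure.elemSet (P : pStructure p k L) (g : Set L) (r : ℕ) : Set (Submodule k L) :=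
  {e | (e : Set L) ⊆ g ∧ Module.finrank k ↥e = r ∧ P.IsElemAbelian e}

/-- Pairs of linearly independent vectors spanning a member of a given collection `C` of
two-dimensional subspaces. -/
def planePairs (C : Set (Submodule k L)) : Set (L × L) :=
  {z | LinearIndependent k ![z.1, z.2] ∧ Submodule.span k (Set.range ![z.1, z.2]) ∈ C}

/-- The canonical (quotient) map from spanning pairs to planes. -/
def planeMk (C : Set (Submodule k L)) (z : planePairs C) : ↥C :=
  ⟨Submodule.span k (Set.range ![z.val.1, z.val.2]), z.prop.2⟩

/-- The Zariski topology on a collection of two-dimensional subspaces (e.g. `E(2,g)` or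
`Gr₂(g)^{V(g)}`), defined as the quotient topology induced from the Zariski topology on the
variety of spanning pairs. -/
def planeTop (C : Set (Submodule k L)) : TopologicalSpace ↥C :=
  TopologicalSpace.coinduced (planeMk C)
    (TopologicalSpace.induced Subtype.val (zar k (L × L)))

/-- The statement that the projective variety `E(2, g)` is connected (the empty space counts
as connected). -/
def pStructure.EIsConnected (P : pStructure p k L) (g : Set L) : Prop :=
  @IsPreconnected ↥(P.elemSet g 2) (planeTop (P.elemSet g 2)) Set.univ

/-- `N_i(g) = {x | (ad x)^i = 0}`. -/
def Ncal (i : ℕ) : Set L := {x | (LieAlgebra.ad k L x) ^ i = 0}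

/-- The truncated exponential `exp x = ∑_{i<p} (ad x)^i / i!`. -/
def expAd (x : L) : Module.End k L :=
  ∑ i ∈ Finset.range p, (i.factorial : k)⁻¹ • ((LieAlgebra.ad k L x) ^ i)

/-- Automorphisms of the Lie algebra `L` (as linear endomorphisms). -/
def IsLieAut (f : Module.End k L) : Prop :=
  Function.Bijective f ∧ ∀ x y : L, f ⁅x, y⁆ = ⁅f x, f y⁆

/-- Automorphisms of the restricted Lie algebra `(L, [p])`, i.e. automorphisms commuting with
the `p`-map (the group `Aut_p(g)`). -/
def pStructure.IspAut (P : pStructure p k L) (f : Module.End k L) : Prop :=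
  IsLieAut f ∧ ∀ x : L, f (P.pmap x) = P.pmap (f x)

/-- A restricted Lie algebra is admissible if `N₃(g) ⊆ V(g)` and `exp(N₃(g)) ⊆ Aut_p(g)`. -/
def pStructure.IsAdmissible (P : pStructure p k L) : Prop :=
  Ncal (k := k) 3 ⊆ P.null ∧ ∀ x ∈ Ncal (k := k) (L := L) 3, P.IspAut (expAd (p := p) x)

end ElemAb

open ElemAb

/-!
Lift `x̄ ∈ N₃(g/C(g))` to `x ∈ g`. Then `a = ad x` maps `g` into `C(g)` after three steps, so
`a⁴ = 0`, hence `ad (x^[p]) = aᵖ = 0` and `x^[p]` is central. The automorphism `exp x̄` is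
induced by `φ = 1 + a + a²/2`, and the whole argument rests on the identity
`E ∘ ad v = ad (φ v) ∘ E` for the invertible operator `E = 1 + a + a²/2 + a³/6` (which needs
`6 ≠ 0`). Conjugation by `E` is multiplicative, so `ad (φ ⁅z, w⁆) = ad ⁅φ z, φ w⁆` and
`ad (φ (y^[p])) = (ad (φ y))ᵖ = ad ((φ y)^[p])`: modulo the kernel `C(g)` of `ad`, `φ` preserves
the bracket and the `p`-map.
-/

namespace ElemAb

open LieAlgebra

section TruncExp

variable (k : Type) [Field k] {A : Type} [Ring A] [Algebra k A]

def truncExp (n : ℕ) (a : A) : A :=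
  ∑ i ∈ Finset.range n, (i.factorial : k)⁻¹ • a ^ i

variable {k}

lemma truncExp_eq_of_pow_eq_zero {a : A} {n m : ℕ} (ha : a ^ n = 0) (hnm : n ≤ m) :
    truncExp k m a = truncExp k n a := by
  refine (Finset.sum_subset (Finset.range_subset_range.mpr hnm) fun i _ hi => ?_).symm
  rw [pow_eq_zero_of_le (by simpa using hi) ha, smul_zero]

lemma isUnit_truncExp {a : A} (ha : IsNilpotent a) {n : ℕ} (hn : 0 < n) :
    IsUnit (truncExp k n a) := by
  obtain ⟨n, rfl⟩ := Nat.exists_eq_add_of_lt hn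
  have h : truncExp k (0 + n + 1) a =
      1 + a * ∑ i ∈ Finset.range n, ((i + 1).factorial : k)⁻¹ • a ^ i := by
    simp only [truncExp, Finset.sum_range_succ', Finset.mul_sum, mul_smul_comm, ← pow_succ',
      pow_zero, Nat.factorial_zero, Nat.cast_one, inv_one, one_smul, add_comm]
  rw [h]
  refine IsNilpotent.isUnit_one_add (Commute.isNilpotent_mul_right ?_ ha)
  exact Commute.sum_right _ _ _ fun i _ => ((Commute.refl a).pow_right i).smul_right _

lemma truncExp_three (a : A) : truncExp k 3 a = 1 + a + (2 : k)⁻¹ • a ^ 2 := by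
  simp [truncExp, Finset.sum_range_succ, Nat.factorial]

lemma truncExp_four (a : A) :
    truncExp k 4 a = 1 + a + (2 : k)⁻¹ • a ^ 2 + (6 : k)⁻¹ • a ^ 3 := by
  simp [truncExp, Finset.sum_range_succ, Nat.factorial]

end TruncExp

section AdCubeCentral

variable {k : Type} [Field k] {L : Type} [LieRing L] [LieAlgebra k L]

lemma expAd_eq_truncExp (p : ℕ) (x : L) : expAd (p := p) x = truncExp k p (ad k L x) := rfl

lemma pStructure.ad_pmap_eq {p : ℕ} (P : pStructure p k L) (y : L) :
    ad k L (P.pmap y) = ad k L y ^ p :=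
  LinearMap.ext (P.ad_pmap y)

lemma lie_eq_zero_of_mem_center {c : L} (hc : c ∈ center k L) (y : L) : ⁅c, y⁆ = 0 := by
  rw [← self_module_ker_eq_center, LieModule.mem_ker] at hc
  exact hc y

lemma lie_eq_zero_of_mem_center' {c : L} (hc : c ∈ center k L) (y : L) : ⁅y, c⁆ = 0 := by
  rw [← lie_skew, lie_eq_zero_of_mem_center hc, neg_zero]

lemma sub_mem_center_of_ad_eq {u v : L} (h : ad k L u = ad k L v) : u - v ∈ center k L := by
  rw [← self_module_ker_eq_center, LieModule.mem_ker]
  intro y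
  rw [sub_lie, ← ad_apply (R := k), h, ad_apply, sub_self]

lemma sub_mem_center_of_semiconjBy {E b : Module.End k L} (hE : IsUnit E) {u v : L}
    (hu : SemiconjBy E b (ad k L u)) (hv : SemiconjBy E b (ad k L v)) : u - v ∈ center k L :=
  sub_mem_center_of_ad_eq (hE.mul_left_inj.mp (hu.eq.symm.trans hv.eq))

variable {x : L} (hx : ∀ y, (ad k L x ^ 3) y ∈ center k L)
include hx

lemma ad_pow_four_eq_zero_of_ad_pow_three_mem_center : ad k L x ^ 4 = 0 := by
  ext y
  rw [pow_succ', Module.End.mul_apply, ad_apply, lie_eq_zero_of_mem_center' (hx y),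
    LinearMap.zero_apply]

lemma pmap_mem_center_of_ad_pow_three_mem_center {p : ℕ} (hp : 4 ≤ p) (P : pStructure p k L) :
    P.pmap x ∈ center k L := by
  rw [← self_module_ker_eq_center, LieModule.mem_ker]
  intro y
  rw [P.ad_pmap, pow_eq_zero_of_le hp (ad_pow_four_eq_zero_of_ad_pow_three_mem_center hx),
    LinearMap.zero_apply]

lemma isUnit_truncExp_ad_of_ad_pow_three_mem_center {n : ℕ} (hn : 0 < n) :
    IsUnit (truncExp k n (ad k L x)) :=
  isUnit_truncExp ⟨4, ad_pow_four_eq_zero_of_ad_pow_three_mem_center hx⟩ hn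

lemma lie_ad_pow_two_eq_zero_of_ad_pow_three_mem_center (h6 : (6 : k) ≠ 0) (v w : L) :
    ⁅(ad k L x ^ 2) v, (ad k L x ^ 2) w⁆ = 0 := by
  have h := ad_pow_lie k x v w 4
  rw [Finset.Nat.sum_antidiagonal_eq_sum_range_succ_mk] at h
  simp only [Finset.sum_range_succ, Finset.sum_range_zero, Nat.reduceSub,
    ad_pow_four_eq_zero_of_ad_pow_three_mem_center hx, lie_eq_zero_of_mem_center (hx _),
    lie_eq_zero_of_mem_center' (hx _), LinearMap.zero_apply, lie_zero, zero_lie, smul_zero,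
    zero_add, add_zero] at h
  rw [show Nat.choose 4 2 = 6 from rfl, ← Nat.cast_smul_eq_nsmul k, Nat.cast_ofNat] at h
  exact (smul_eq_zero.mp h.symm).resolve_left h6

lemma semiconjBy_truncExp_four_ad (h2 : (2 : k) ≠ 0) (h3 : (3 : k) ≠ 0) (v : L) :
    SemiconjBy (truncExp k 4 (ad k L x)) (ad k L v) (ad k L (truncExp k 3 (ad k L x) v)) := by
  have h6 : (6 : k) ≠ 0 := by
    have h := mul_ne_zero h2 h3
    norm_num at h
    exact h
  have hpow (n : ℕ) (w : L) : (ad k L x ^ n) ⁅v, w⁆ =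
      ∑ i ∈ Finset.range (n + 1), n.choose i • ⁅(ad k L x ^ i) v, (ad k L x ^ (n - i)) w⁆ := by
    rw [ad_pow_lie, Finset.Nat.sum_antidiagonal_eq_sum_range_succ_mk]
  ext w
  have e1 := hpow 1 w
  have e2 := hpow 2 w
  have e3 := hpow 3 w
  simp only [Finset.sum_range_succ, Finset.sum_range_zero, Nat.reduceSub, pow_zero, pow_one,
    Module.End.one_apply, zero_add, Nat.choose_zero_right, Nat.choose_self, one_smul,
    Nat.choose_one_right, ad_apply] at e1 e2 e3
  simp only [truncExp_four, truncExp_three, Module.End.mul_apply, LinearMap.add_apply,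
    LinearMap.smul_apply, Module.End.one_apply, ad_apply, e1, e2, e3,
    show Nat.choose 3 2 = 3 from rfl]
  -- Both sides are sums of `⁅aⁱ v, aʲ w⁆ / (i! j!)`; the terms present on one side only
  -- contain `a³` or `⁅a² v, a² w⁆`, and vanish.
  simp only [lie_add, add_lie, lie_smul, smul_lie, lie_eq_zero_of_mem_center (hx _),
    lie_eq_zero_of_mem_center' (hx _), lie_ad_pow_two_eq_zero_of_ad_pow_three_mem_center hx h6,
    smul_zero, add_zero]
  match_scalars <;> field_simp <;> norm_num

variable (h2 : (2 : k) ≠ 0) (h3 : (3 : k) ≠ 0)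
include h2 h3

lemma truncExp_three_lie_sub_mem_center (z w : L) :
    truncExp k 3 (ad k L x) ⁅z, w⁆ -
      ⁅truncExp k 3 (ad k L x) z, truncExp k 3 (ad k L x) w⁆ ∈ center k L := by
  have hE := isUnit_truncExp_ad_of_ad_pow_three_mem_center hx (n := 4) (by norm_num)
  have hz := semiconjBy_truncExp_four_ad hx h2 h3 z
  have hw := semiconjBy_truncExp_four_ad hx h2 h3 w
  refine sub_mem_center_of_semiconjBy hE (semiconjBy_truncExp_four_ad hx h2 h3 ⁅z, w⁆) ?_
  simp only [LieHom.map_lie, Ring.lie_def]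
  exact (hz.mul_right hw).sub_right (hw.mul_right hz)

lemma truncExp_three_pmap_sub_mem_center {p : ℕ} (P : pStructure p k L) (y : L) :
    truncExp k 3 (ad k L x) (P.pmap y) - P.pmap (truncExp k 3 (ad k L x) y) ∈ center k L := by
  have hE := isUnit_truncExp_ad_of_ad_pow_three_mem_center hx (n := 4) (by norm_num)
  refine sub_mem_center_of_semiconjBy hE (semiconjBy_truncExp_four_ad hx h2 h3 (P.pmap y)) ?_
  rw [P.ad_pmap_eq, P.ad_pmap_eq]
  exact (semiconjBy_truncExp_four_ad hx h2 h3 y).pow_right p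

end AdCubeCentral

section Quotient

variable {k : Type} [Field k] {L : Type} [LieRing L] [LieAlgebra k L] (I : LieIdeal k L)

lemma ad_mk_pow_apply (x y : L) (n : ℕ) :
    (ad k (L ⧸ I) (LieSubmodule.Quotient.mk x) ^ n) (LieSubmodule.Quotient.mk y) =
      LieSubmodule.Quotient.mk ((ad k L x ^ n) y) := by
  induction n with
  | zero => rfl
  | succ n ih => rw [pow_succ', Module.End.mul_apply, ih, pow_succ', Module.End.mul_apply,
      ad_apply, ad_apply, LieSubmodule.Quotient.mk_bracket]

lemma truncExp_ad_mk_apply (n : ℕ) (x y : L) :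
    truncExp k n (ad k (L ⧸ I) (LieSubmodule.Quotient.mk x)) (LieSubmodule.Quotient.mk y) =
      LieSubmodule.Quotient.mk (truncExp k n (ad k L x) y) := by
  simp only [truncExp, LinearMap.sum_apply, LinearMap.smul_apply, ad_mk_pow_apply]
  change _ = (I : Submodule k L).mkQ _
  simp only [map_sum, map_smul, Submodule.mkQ_apply]
  rfl

end Quotient

section CenterQuotient

variable {p : ℕ} {k : Type} [Field k] {L : Type} [LieRing L] [LieAlgebra k L]

lemma ad_pow_three_apply_mem_center_of_ad_mk {x : L}
    (hx : ad k (L ⧸ center k L) (LieSubmodule.Quotient.mk x) ^ 3 = 0) (y : L) :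
    (ad k L x ^ 3) y ∈ center k L := by
  rw [← LieSubmodule.Quotient.mk_eq_zero', ← ad_mk_pow_apply, hx, LinearMap.zero_apply]

variable (P : pStructure p k L) (Q : pStructure p k (L ⧸ center k L))
  (hQ : ∀ x : L, Q.pmap (LieSubmodule.Quotient.mk (N := center k L) x) =
    LieSubmodule.Quotient.mk (N := center k L) (P.pmap x))
  {x : L ⧸ center k L} (hx : ad k (L ⧸ center k L) x ^ 3 = 0)
include hQ hx

lemma mem_null_of_ad_pow_three_eq_zero (hp : 4 ≤ p) : x ∈ Q.null := by
  obtain ⟨x, rfl⟩ := Submodule.Quotient.mk_surjective _ x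
  rw [pStructure.null, Set.mem_ofPred_eq, hQ, LieSubmodule.Quotient.mk_eq_zero']
  exact pmap_mem_center_of_ad_pow_three_mem_center (ad_pow_three_apply_mem_center_of_ad_mk hx) hp P

lemma ispAut_expAd_of_ad_pow_three_eq_zero (hp : 3 ≤ p) (h2 : (2 : k) ≠ 0)
    (h3 : (3 : k) ≠ 0) : Q.IspAut (expAd (p := p) x) := by
  have hφ : expAd (p := p) x = truncExp k 3 (ad k (L ⧸ center k L) x) :=
    (expAd_eq_truncExp p x).trans (truncExp_eq_of_pow_eq_zero hx hp)
  obtain ⟨x, rfl⟩ := Submodule.Quotient.mk_surjective _ x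
  have hcube := ad_pow_three_apply_mem_center_of_ad_mk hx
  refine ⟨⟨?_, fun z w => ?_⟩, fun z => ?_⟩
  · rw [hφ, ← Module.End.isUnit_iff]
    exact isUnit_truncExp ⟨3, hx⟩ (by norm_num)
  · obtain ⟨z, rfl⟩ := Submodule.Quotient.mk_surjective _ z
    obtain ⟨w, rfl⟩ := Submodule.Quotient.mk_surjective _ w
    rw [hφ, ← LieSubmodule.Quotient.mk_bracket]
    simp only [truncExp_ad_mk_apply]
    rw [← LieSubmodule.Quotient.mk_bracket, Submodule.Quotient.eq]
    exact truncExp_three_lie_sub_mem_center hcube h2 h3 z w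
  · obtain ⟨y, rfl⟩ := Submodule.Quotient.mk_surjective _ z
    rw [hφ, hQ, truncExp_ad_mk_apply, truncExp_ad_mk_apply, hQ, Submodule.Quotient.eq]
    exact truncExp_three_pmap_sub_mem_center hcube h2 h3 P y

end CenterQuotient

end ElemAb

theorem statement7_general
    (p : ℕ) (hp5 : 5 ≤ p)
    (k : Type) [Field k] [CharP k p]
    (L : Type) [LieRing L] [LieAlgebra k L]
    (P : pStructure p k L)
    (Q : pStructure p k (L ⧸ LieAlgebra.center k L))
    (hQ : ∀ x : L,
      Q.pmap (LieSubmodule.Quotient.mk (N := LieAlgebra.center k L) x) =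
        LieSubmodule.Quotient.mk (N := LieAlgebra.center k L) (P.pmap x)) :
    Q.IsAdmissible := by
  have hchar (n : ℕ) (hn : 0 < n) (hnp : n < p) : (n : k) ≠ 0 :=
    (CharP.cast_eq_zero_iff k p n).not.mpr (Nat.not_dvd_of_pos_of_lt hn hnp)
  have h2 : (2 : k) ≠ 0 := by exact_mod_cast hchar 2 (by norm_num) (by omega)
  have h3 : (3 : k) ≠ 0 := by exact_mod_cast hchar 3 (by norm_num) (by omega)
  exact ⟨fun x hx => mem_null_of_ad_pow_three_eq_zero P Q hQ hx (by omega),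
    fun x hx => ispAut_expAd_of_ad_pow_three_eq_zero P Q hQ hx (by omega) h2 h3⟩

/-- Let `p ≥ 5`.  For any restricted Lie algebra `(g,[p])`, the quotient
`g/C(g)` (with the induced `p`-map) is admissible, i.e. `N₃(g/C(g)) ⊆ V(g/C(g))` and
`exp(N₃(g/C(g))) ⊆ Aut_p(g/C(g))`. -/
theorem statement7
    (p : ℕ) (hp : p.Prime) (hp5 : 5 ≤ p)
    (k : Type) [Field k] [IsAlgClosed k] [CharP k p]
    (L : Type) [LieRing L] [LieAlgebra k L] [FiniteDimensional k L]
    (P : pStructure p k L)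
    (Q : pStructure p k (L ⧸ LieAlgebra.center k L))
    (hQ : ∀ x : L,
      Q.pmap (LieSubmodule.Quotient.mk (N := LieAlgebra.center k L) x) =
        LieSubmodule.Quotient.mk (N := LieAlgebra.center k L) (P.pmap x)) :
    Q.IsAdmissible :=
  statement7_general p hp5 k L P Q hQ
end
end

section
/- Let (g,[p]) be a restricted Lie algebra over k such that exp(c) ∈ Aut_p(g) for every sandwich element c ∈ Sw(g). If X is a Zariski-closed, conical, G_g-stable subset of g with X ≠ {0}, then there exists x₀ ∈ X \ {0} such that [c, x₀] = 0 for all c ∈ Sw(g). -/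
noncomputable section

namespace ElemAb

variable (p : ℕ) (k : Type) [Field k]

variable (L : Type) [LieRing L] [LieAlgebra k L]

variable {p k L}

/-- The set of sandwich elements (absolute zero-divisors) `Sw(g) = {c | (ad c)² = 0}`. -/
def sandwichSet : Set L := {c | (LieAlgebra.ad k L c) ^ 2 = 0}

variable (P : pStructure p k L)

/-- The group `Aut_p(g)` of restricted automorphisms, as a type. -/
def pAutAll : Type := {f : Module.End k L // P.IspAut f}

/-- `Aut_p(g)` carries the Zariski topology induced from `End(g)`. -/
def pAutTop : TopologicalSpace (pAutAll P) :=
  TopologicalSpace.induced Subtype.val (zar k (Module.End k L))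

/-- The identity automorphism. -/
def idpAut : pAutAll P :=
  ⟨1, ⟨⟨⟨fun _ _ h => h, fun b => ⟨b, rfl⟩⟩, fun _ _ => rfl⟩, fun _ => rfl⟩⟩

/-- `G_g = Aut_p(g)°`, the identity component of `Aut_p(g)`. -/
def Gg : Set (pAutAll P) := @connectedComponent _ (pAutTop P) (idpAut P)

end ElemAb

open ElemAb


-- ===== auxiliary machinery =====

open Submodule

section Jac

variable (k : Type) [Field k] {E : Type} [Ring E] [Algebra k E]

lemma sum_le_submodule {ι : Type} (s : Finset ι) (f : ι → Submodule k E) {N : Submodule k E}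
    (h : ∀ i ∈ s, f i ≤ N) : (∑ i ∈ s, f i) ≤ N := by
  classical
  induction s using Finset.cons_induction with
  | empty => simp
  | cons a s ha ih =>
    rw [Finset.sum_cons]
    exact sup_le (h a (Finset.mem_cons_self a s)) (ih fun i hi => h i (Finset.mem_cons_of_mem hi))

lemma le_sum_submodule {ι : Type} (s : Finset ι) (f : ι → Submodule k E) {i : ι}
    (h : i ∈ s) : f i ≤ ∑ j ∈ s, f j := by
  classical
  induction s using Finset.cons_induction with
  | empty => simp at h
  | cons a s ha ih =>
    rw [Finset.sum_cons]
    rcases Finset.mem_cons.mp h with h | h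
    · subst h; exact le_sup_left
    · exact (ih h).trans le_sup_right

/-- truncated sum of powers `∑_{i<n} M^(i+j)` of the span of `T`. -/
def Rj (T : Set E) (n j : ℕ) : Submodule k E :=
  ∑ i ∈ Finset.range n, (span k T) ^ (i + j)

variable {T : Set E} {n : ℕ}

lemma pow_le_Rj (hn : (span k T) ^ n = ⊥) {m j : ℕ} (hj : j ≤ m) :
    (span k T) ^ m ≤ Rj k T n j := by
  by_cases h : m - j < n
  · have hm : m = (m - j) + j := by omega
    rw [hm]
    exact le_sum_submodule k (Finset.range n) (fun i => span k T ^ (i + j)) (Finset.mem_range.2 h)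
  · have hb : (span k T) ^ m = ⊥ := by
      rw [show m = n + (m - n) by omega, pow_add, hn, bot_mul]
    rw [hb]; exact bot_le

lemma Rj_le_Rj (hn : (span k T) ^ n = ⊥) {j j' : ℕ} (h : j' ≤ j) :
    Rj k T n j ≤ Rj k T n j' :=
  sum_le_submodule k _ _ fun _ _ => pow_le_Rj k hn (by omega)

lemma Rj_bot (hn : (span k T) ^ n = ⊥) {j : ℕ} (h : n ≤ j) : Rj k T n j = ⊥ := by
  refine le_bot_iff.mp (sum_le_submodule k _ _ fun i _ => ?_)
  rw [show i + j = n + (i + j - n) by omega, pow_add, hn, bot_mul]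

lemma Rj_mul_Rj (hn : (span k T) ^ n = ⊥) (a b : ℕ) :
    Rj k T n a * Rj k T n b ≤ Rj k T n (a + b) := by
  rw [Rj, Finset.sum_mul]
  refine sum_le_submodule k _ _ fun i _ => ?_
  rw [Rj, Finset.mul_sum]
  refine sum_le_submodule k _ _ fun i' _ => ?_
  rw [← pow_add]
  exact pow_le_Rj k hn (by omega)

lemma M_le_Rj_one (hn : (span k T) ^ n = ⊥) : span k T ≤ Rj k T n 1 := by
  have := pow_le_Rj k hn (m := 1) (j := 1) le_rfl
  rwa [pow_one] at this

lemma one_le_Rj_zero (hn : (span k T) ^ n = ⊥) (hpos : 0 < n) :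
    (1 : Submodule k E) ≤ Rj k T n 0 := by
  have h0 : (0:ℕ) + 0 = 0 := rfl
  have := le_sum_submodule k (Finset.range n) (fun i => (span k T) ^ (i + 0))
    (i := 0) (Finset.mem_range.2 hpos)
  simpa [pow_zero, Rj] using this

lemma Rj_pow (hn : (span k T) ^ n = ⊥) {m : ℕ} (hm : 1 ≤ m) :
    (Rj k T n 1) ^ m ≤ Rj k T n m := by
  induction m, hm using Nat.le_induction with
  | base => rw [pow_one]
  | succ m hm ih =>
    rw [pow_succ]
    exact (mul_le_mul' ih le_rfl).trans
      ((Rj_mul_Rj k hn m 1).trans le_rfl)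

end Jac

section Jac2

variable (k : Type) [Field k] {E : Type} [Ring E] [Algebra k E]

/-- closure of a set under commutators -/
inductive brClos (U : Set E) : E → Prop
  | base {x : E} : x ∈ U → brClos U x
  | br {x y : E} : brClos U x → brClos U y → brClos U (x * y - y * x)

theorem jacobson [FiniteDimensional k E] (S : Set E)
    (hsq : ∀ a ∈ S, a * a = 0)
    (hbr : ∀ a ∈ S, ∀ b ∈ S, a * b - b * a ∈ S) :
    ∃ n : ℕ, 0 < n ∧ (span k S) ^ n = ⊥ := by
  classical
  set D : Set ℕ := {d | ∃ (T : Set E) (n : ℕ), T ⊆ S ∧ (∀ a ∈ T, ∀ b ∈ T, a * b - b * a ∈ T) ∧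
      2 ≤ n ∧ (span k T) ^ n = ⊥ ∧ d = Module.finrank k (Rj k T n 1)} with hD
  have hbotpow : (span k (∅ : Set E)) ^ 2 = ⊥ := by
    rw [span_empty, ← Submodule.zero_eq_bot, zero_pow]; norm_num
  have hne : D.Nonempty :=
    ⟨Module.finrank k (Rj k (∅ : Set E) 2 1),
      ⟨∅, 2, by simp, by simp, le_rfl, hbotpow, rfl⟩⟩
  have hbdd : BddAbove D := by
    refine ⟨Module.finrank k E, fun d hd => ?_⟩
    obtain ⟨T, n, _, _, _, _, rfl⟩ := hd
    exact Submodule.finrank_le _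
  obtain ⟨T, n, hTS, hTbr, hn2, hnil, hrank⟩ := Nat.sSup_mem hne hbdd
  set M := span k T with hM
  set R := Rj k T n 1 with hR
  by_cases hSR : S ⊆ (R : Set E)
  · refine ⟨n, by omega, le_bot_iff.mp ?_⟩
    calc (span k S) ^ n ≤ R ^ n := pow_le_pow_left' (span_le.mpr hSR) n
    _ ≤ Rj k T n n := Rj_pow k hnil (by omega)
    _ = ⊥ := Rj_bot k hnil le_rfl
  · exfalso
    obtain ⟨A₀, hA₀S, hA₀R⟩ := Set.not_subset.mp hSR
    have hMleR : M ≤ R := M_le_Rj_one k hnil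
    have hRmulR : R * R ≤ R := (Rj_mul_Rj k hnil 1 1).trans (Rj_le_Rj k hnil (by omega))
    have hRmulM : R * M ≤ R := (mul_le_mul' le_rfl hMleR).trans hRmulR
    have hMmulR : M * R ≤ R := (mul_le_mul' hMleR le_rfl).trans hRmulR
    -- Step 1: find A ∈ S \ R with [T, A] ⊆ R
    have step1 : ∃ A, A ∈ S ∧ A ∉ R ∧ ∀ t ∈ T, t * A - A * t ∈ R := by
      by_contra hcon
      push_neg at hcon
      have hF : ∀ a : {x : E // x ∈ S ∧ x ∉ R}, ∃ b : {x : E // x ∈ S ∧ x ∉ R},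
          ∃ t ∈ M, (b : E) = t * (a : E) - (a : E) * t := by
        rintro ⟨a, haS, haR⟩
        obtain ⟨t, htT, htR⟩ := hcon a haS haR
        exact ⟨⟨t * a - a * t, hbr t (hTS htT) a haS, htR⟩, t, subset_span htT, rfl⟩
      choose G hG using hF
      set x₀ : {x : E // x ∈ S ∧ x ∉ R} := ⟨A₀, hA₀S, hA₀R⟩ with hx₀
      set g : ℕ → {x : E // x ∈ S ∧ x ∉ R} := fun j => G^[j] x₀ with hg
      set X : Submodule k E := span k {A₀} with hX
      set Ns : ℕ → Submodule k E :=
        fun j => ∑ a ∈ Finset.range (j + 1), (M ^ a * X) * M ^ (j - a) with hNs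
      have hMN : ∀ j, M * Ns j ≤ Ns (j + 1) := by
        intro j
        rw [hNs]
        simp only []
        rw [Finset.mul_sum]
        refine sum_le_submodule k _ _ fun a ha => ?_
        have ha' : a ≤ j := by simpa using Nat.lt_succ_iff.mp (Finset.mem_range.mp ha)
        have hterm : M * ((M ^ a * X) * M ^ (j - a))
            = (M ^ (a + 1) * X) * M ^ ((j + 1) - (a + 1)) := by
          rw [show (j + 1) - (a + 1) = j - a by omega, ← mul_assoc, ← mul_assoc, ← pow_succ']
        rw [hterm]
        exact le_sum_submodule k (Finset.range (j + 2))
          (fun a => (M ^ a * X) * M ^ ((j + 1) - a)) (Finset.mem_range.2 (by omega))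
      have hNM : ∀ j, Ns j * M ≤ Ns (j + 1) := by
        intro j
        rw [hNs]
        simp only []
        rw [Finset.sum_mul]
        refine sum_le_submodule k _ _ fun a ha => ?_
        have ha' : a ≤ j := Nat.lt_succ_iff.mp (Finset.mem_range.mp ha)
        have hterm : ((M ^ a * X) * M ^ (j - a)) * M
            = (M ^ a * X) * M ^ ((j + 1) - a) := by
          rw [show (j + 1) - a = (j - a) + 1 by omega, mul_assoc, ← pow_succ]
        rw [hterm]
        exact le_sum_submodule k (Finset.range (j + 2))
          (fun a => (M ^ a * X) * M ^ ((j + 1) - a)) (Finset.mem_range.2 (by omega))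
      have hgmem : ∀ j, (g j : E) ∈ Ns j := by
        intro j
        induction j with
        | zero =>
          have hg0 : g 0 = x₀ := rfl
          rw [hg0]
          have hX0 : X ≤ Ns 0 := by
            rw [hNs]
            simp only []
            rw [Finset.sum_range_one]
            simp [pow_zero, one_mul, mul_one]
          exact hX0 (mem_span_singleton_self A₀)
        | succ j ih =>
          have hsucc : g (j + 1) = G (g j) := Function.iterate_succ_apply' G j x₀
          obtain ⟨t, htM, heq⟩ := hG (g j)
          rw [hsucc, heq]
          exact sub_mem (hMN j (mul_mem_mul htM ih)) (hNM j (mul_mem_mul ih htM))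
      have hbot : Ns (2 * n) ≤ ⊥ := by
        rw [hNs]
        simp only []
        refine sum_le_submodule k _ _ fun a ha => ?_
        rcases le_or_gt n a with h | h
        · have hMa : M ^ a = ⊥ := by
            rw [show a = n + (a - n) by omega, pow_add, hnil, bot_mul]
          rw [hMa, bot_mul, bot_mul]
        · have ha' : a ≤ 2 * n := by omega
          have hMb : M ^ (2 * n - a) = ⊥ := by
            rw [show 2 * n - a = n + (2 * n - a - n) by omega, pow_add, hnil, bot_mul]
          rw [hMb, mul_bot]
      have hzero : (g (2 * n) : E) = 0 := by
        have := hbot (hgmem (2 * n))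
        simpa using this
      exact (g (2 * n)).2.2 (hzero ▸ zero_mem R)
    obtain ⟨A, hAS, hAR, hAT⟩ := step1
    have hATR : ∀ t ∈ T, A * t - t * A ∈ R := by
      intro t ht
      have h' := neg_mem (hAT t ht)
      rwa [neg_sub] at h'
    -- Step 2
    have step2 : ∀ y ∈ R, A * y - y * A ∈ R := by
      set φ : E →ₗ[k] E := LinearMap.mulLeft k A - LinearMap.mulRight k A with hφ
      have hφapp : ∀ y : E, φ y = A * y - y * A := fun y => rfl
      have hM1 : M ≤ R.comap φ := by
        refine span_le.mpr fun t ht => ?_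
        simp only [SetLike.mem_coe, mem_comap, hφapp]
        exact hATR t ht
      have hpow : ∀ i, M ^ (i + 1) ≤ R.comap φ := by
        intro i
        induction i with
        | zero => rw [pow_one]; exact hM1
        | succ i ih =>
          rw [pow_succ]
          intro x hx
          refine Submodule.mul_induction_on hx ?_ (fun x y hx hy => add_mem hx hy)
          intro m hm t ht
          simp only [mem_comap, hφapp]
          have key : A * (m * t) - (m * t) * A
              = (A * m - m * A) * t + m * (A * t - t * A) := by noncomm_ring
          rw [key]
          have h1 : (A * m - m * A) * t ∈ R := hRmulM (mul_mem_mul (ih hm) ht)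
          have hmR : m ∈ R := (pow_le_Rj k hnil (by omega)) hm
          have h2 : m * (A * t - t * A) ∈ R := hRmulR (mul_mem_mul hmR (hM1 ht))
          exact add_mem h1 h2
      have hRc : R ≤ R.comap φ := sum_le_submodule k _ _ fun i _ => hpow i
      intro y hy
      have := hRc hy
      rw [mem_comap, hφapp] at this
      exact this
    -- Step 3
    set A' : Submodule k E := span k {A} with hA'
    have hAA : A' * A' = ⊥ := by
      rw [hA', span_mul_span, Set.singleton_mul_singleton, hsq A hAS, span_zero_singleton]
    have hAM : A' * M ≤ M * A' + R := by
      rw [hA', hM, span_mul_span]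
      refine span_le.mpr ?_
      rintro x ⟨a, ha, t, ht, rfl⟩
      have ha' : a = A := Set.eq_of_mem_singleton ha
      show a * t ∈ span k T * span k {A} + R
      have hrw : a * t = t * a + (a * t - t * a) := by abel
      rw [hrw, ha']
      exact add_mem_sup (mul_mem_mul (subset_span ht) (subset_span rfl)) (hATR t ht)
    set B : ℕ → Submodule k E := fun j =>
      Rj k T n j + Rj k T n j * A' + A' * Rj k T n j + (A' * Rj k T n j) * A' with hBdef
    have comp1 : ∀ j, Rj k T n j ≤ B j :=
      fun j => le_sup_left.trans (le_sup_left.trans le_sup_left)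
    have comp2 : ∀ j, Rj k T n j * A' ≤ B j :=
      fun j => le_sup_right.trans (le_sup_left.trans le_sup_left)
    have comp3 : ∀ j, A' * Rj k T n j ≤ B j := fun j => le_sup_right.trans le_sup_left
    have comp4 : ∀ j, (A' * Rj k T n j) * A' ≤ B j := fun j => le_sup_right
    have hRjM : ∀ j, Rj k T n j * M ≤ Rj k T n (j + 1) :=
      fun j => (mul_le_mul' le_rfl hMleR).trans (Rj_mul_Rj k hnil j 1)
    have hRjR : ∀ j, Rj k T n j * R ≤ Rj k T n (j + 1) := fun j => Rj_mul_Rj k hnil j 1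
    have t2 : ∀ j, (Rj k T n j * A') * M ≤ B (j + 1) := by
      intro j
      calc (Rj k T n j * A') * M = Rj k T n j * (A' * M) := mul_assoc _ _ _
        _ ≤ Rj k T n j * (M * A' + R) := mul_le_mul' le_rfl hAM
        _ = Rj k T n j * (M * A') + Rj k T n j * R := mul_add _ _ _
        _ ≤ B (j + 1) := by
            refine sup_le ?_ ((hRjR j).trans (comp1 (j + 1)))
            rw [← mul_assoc]
            exact (mul_le_mul' (hRjM j) le_rfl).trans (comp2 (j + 1))
    have t4 : ∀ j, ((A' * Rj k T n j) * A') * M ≤ B (j + 1) := by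
      intro j
      calc ((A' * Rj k T n j) * A') * M = (A' * Rj k T n j) * (A' * M) := mul_assoc _ _ _
        _ ≤ (A' * Rj k T n j) * (M * A' + R) := mul_le_mul' le_rfl hAM
        _ = (A' * Rj k T n j) * (M * A') + (A' * Rj k T n j) * R := mul_add _ _ _
        _ ≤ B (j + 1) := by
            refine sup_le ?_ ?_
            · rw [show (A' * Rj k T n j) * (M * A') = (A' * (Rj k T n j * M)) * A' by
                simp only [mul_assoc]]
              exact (mul_le_mul' (mul_le_mul' le_rfl (hRjM j)) le_rfl).trans
                (comp4 (j + 1))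
            · rw [mul_assoc]
              exact (mul_le_mul' le_rfl (hRjR j)).trans (comp3 (j + 1))
    have hBM : ∀ j, B j * M ≤ B (j + 1) := by
      intro j
      rw [hBdef]
      simp only []
      rw [add_mul, add_mul, add_mul]
      refine sup_le (sup_le (sup_le ?_ (t2 j)) ?_) (t4 j)
      · exact (hRjM j).trans (comp1 (j + 1))
      · rw [mul_assoc]
        exact (mul_le_mul' le_rfl (hRjM j)).trans (comp3 (j + 1))
    have hBA : ∀ j, B j * A' ≤ Rj k T n j * A' + (A' * Rj k T n j) * A' := by
      intro j
      rw [hBdef]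
      simp only []
      rw [add_mul, add_mul, add_mul]
      refine sup_le (sup_le (sup_le le_sup_left ?_) le_sup_right) ?_
      · rw [mul_assoc, hAA, mul_bot]
        exact bot_le
      · rw [mul_assoc, hAA, mul_bot]
        exact bot_le
    have hBAM : ∀ j, (Rj k T n j * A' + (A' * Rj k T n j) * A') * M ≤ B (j + 1) := by
      intro j
      rw [add_mul]
      exact sup_le (t2 j) (t4 j)
    have hBAA : ∀ j, (Rj k T n j * A' + (A' * Rj k T n j) * A') * A' ≤ ⊥ := by
      intro j
      rw [add_mul, mul_assoc, mul_assoc, hAA, mul_bot, mul_bot]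
      simp
    have hBanti : ∀ j, B (j + 1) ≤ B j := by
      intro j
      have hRa : Rj k T n (j + 1) ≤ Rj k T n j := Rj_le_Rj k hnil (by omega)
      rw [hBdef]
      simp only []
      refine sup_le (sup_le (sup_le ?_ ?_) ?_) ?_
      · exact hRa.trans (comp1 j)
      · exact (mul_le_mul' hRa le_rfl).trans (comp2 j)
      · exact (mul_le_mul' le_rfl hRa).trans (comp3 j)
      · exact (mul_le_mul' (mul_le_mul' le_rfl hRa) le_rfl).trans (comp4 j)
    have hMp : ∀ m, (M ⊔ A') ^ (2 * m + 1) ≤ B m := by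
      intro m
      induction m with
      | zero =>
        rw [show 2 * 0 + 1 = 1 by omega, pow_one]
        refine sup_le ?_ ?_
        · have h1 : M ≤ Rj k T n 0 := by
            have := pow_le_Rj k hnil (m := 1) (j := 0) (by omega)
            rwa [pow_one] at this
          exact h1.trans (comp1 0)
        · have h2 : A' ≤ A' * Rj k T n 0 := by
            have := mul_le_mul' (le_refl A') (one_le_Rj_zero k hnil (by omega))
            rwa [mul_one] at this
          exact h2.trans (comp3 0)
      | succ m ih =>
        rw [show 2 * (m + 1) + 1 = (2 * m + 1) + 1 + 1 by omega, pow_succ, pow_succ]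
        have hBmM' : B m * (M ⊔ A') ≤ B (m + 1) + (Rj k T n m * A' + (A' * Rj k T n m) * A') := by
          rw [show B m * (M ⊔ A') = B m * M + B m * A' from mul_add _ _ _]
          exact sup_le ((hBM m).trans le_sup_left) ((hBA m).trans le_sup_right)
        calc ((M ⊔ A') ^ (2 * m + 1) * (M ⊔ A')) * (M ⊔ A')
            ≤ (B m * (M ⊔ A')) * (M ⊔ A') :=
              mul_le_mul' (mul_le_mul' ih le_rfl) le_rfl
          _ ≤ (B (m + 1) + (Rj k T n m * A' + (A' * Rj k T n m) * A')) * (M ⊔ A') :=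
              mul_le_mul' hBmM' le_rfl
          _ ≤ B (m + 1) := by
              rw [add_mul]
              refine sup_le ?_ ?_
              · rw [show (B (m+1)) * (M ⊔ A') = B (m+1) * M + B (m+1) * A' from mul_add _ _ _]
                refine sup_le ((hBM (m+1)).trans (hBanti (m+1))) ?_
                exact (hBA (m+1)).trans (sup_le (comp2 (m+1)) (comp4 (m+1)))
              · rw [show (Rj k T n m * A' + (A' * Rj k T n m) * A') * (M ⊔ A')
                    = (Rj k T n m * A' + (A' * Rj k T n m) * A') * M
                      + (Rj k T n m * A' + (A' * Rj k T n m) * A') * A' from mul_add _ _ _]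
                exact sup_le (hBAM m) ((hBAA m).trans bot_le)
    have hBn : B n ≤ ⊥ := by
      have hRn : Rj k T n n = ⊥ := Rj_bot k hnil le_rfl
      rw [hBdef]
      simp only []
      rw [hRn, bot_mul, mul_bot, bot_mul]
      simp
    have hM'bot : (M ⊔ A') ^ (2 * n + 1) = ⊥ := le_bot_iff.mp ((hMp n).trans hBn)
    -- assemble the contradiction
    have hspanTA : span k (T ∪ {A}) = M ⊔ A' := by rw [span_union, hM, hA']
    have hM'nil : (span k (T ∪ {A})) ^ (2 * n + 1) = ⊥ := by rw [hspanTA]; exact hM'bot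
    set Th : Set E := {x | brClos (T ∪ {A}) x} with hTh
    have hThR' : ∀ x, brClos (T ∪ {A}) x → x ∈ Rj k (T ∪ {A}) (2 * n + 1) 1 := by
      intro x hx
      induction hx with
      | base h => exact (M_le_Rj_one k hM'nil) (subset_span h)
      | br hx hy ihx ihy =>
        have hmul : Rj k (T ∪ {A}) (2*n+1) 1 * Rj k (T ∪ {A}) (2*n+1) 1
            ≤ Rj k (T ∪ {A}) (2*n+1) 1 :=
          (Rj_mul_Rj k hM'nil 1 1).trans (Rj_le_Rj k hM'nil (by omega))
        exact sub_mem (hmul (mul_mem_mul ihx ihy)) (hmul (mul_mem_mul ihy ihx))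
    have hThS : ∀ x, brClos (T ∪ {A}) x → x ∈ S := by
      intro x hx
      induction hx with
      | base h =>
        rcases h with h | h
        · exact hTS h
        · exact Set.eq_of_mem_singleton h ▸ hAS
      | br hx hy ihx ihy => exact hbr _ ihx _ ihy
    have hThnil : (span k Th) ^ (2 * n + 1) = ⊥ := by
      refine le_bot_iff.mp ?_
      have h1 : span k Th ≤ Rj k (T ∪ {A}) (2*n+1) 1 := span_le.mpr fun x hx => hThR' x hx
      calc (span k Th) ^ (2*n+1) ≤ (Rj k (T ∪ {A}) (2*n+1) 1) ^ (2*n+1) :=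
            pow_le_pow_left' h1 _
        _ ≤ Rj k (T ∪ {A}) (2*n+1) (2*n+1) := Rj_pow k hM'nil (by omega)
        _ = ⊥ := Rj_bot k hM'nil le_rfl
    have hDmem : Module.finrank k (Rj k Th (2*n+1) 1) ∈ D :=
      ⟨Th, 2*n+1, fun x hx => hThS x hx, fun a ha b hb => brClos.br ha hb, by omega, hThnil, rfl⟩
    have hAmem : A ∈ Rj k Th (2*n+1) 1 :=
      (M_le_Rj_one k hThnil) (subset_span (brClos.base (Or.inr rfl)))
    have hle : R ≤ Rj k Th (2*n+1) 1 := by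
      rw [hR, Rj]
      refine sum_le_submodule k _ _ fun i hi => ?_
      have hTTh : T ⊆ Th := fun t ht => brClos.base (Or.inl ht)
      calc M ^ (i+1) ≤ (span k Th) ^ (i+1) := pow_le_pow_left' (span_mono hTTh) _
        _ ≤ Rj k Th (2*n+1) 1 := pow_le_Rj k hThnil (by omega)
    have hlt : R < Rj k Th (2*n+1) 1 := lt_of_le_of_ne hle (by
      intro heq
      exact hAR (heq ▸ hAmem))
    have hfr := Submodule.finrank_lt_finrank_of_lt hlt
    have hle' := le_csSup hbdd hDmem
    omega
lemma list_prod_mem_pow (S : Set E) : ∀ l : List E, (∀ a ∈ l, a ∈ S) →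
    l.prod ∈ (span k S) ^ l.length := by
  intro l
  induction l with
  | nil =>
    intro _
    rw [List.prod_nil, List.length_nil, pow_zero]
    exact Submodule.one_le.mp le_rfl
  | cons c l ih =>
    intro hl
    rw [List.prod_cons, List.length_cons, pow_succ']
    exact Submodule.mul_mem_mul (subset_span (hl c List.mem_cons_self))
      (ih fun d hd => hl d (List.mem_cons_of_mem _ hd))

lemma list_prod_eq_zero_of_nilp (S : Set E) {n : ℕ} (hnB : (span k S) ^ n = ⊥)
    (l : List E) (hl : ∀ a ∈ l, a ∈ S) (hlen : l.length = n) : l.prod = 0 := by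
  have hm := list_prod_mem_pow k S l hl
  rw [hlen, hnB] at hm
  simpa using hm

end Jac2

section ZarTop

open TopologicalSpace ElemAb

variable (k : Type) [Field k]

lemma polyFuns_comp {V W : Type} [AddCommGroup V] [Module k V] [AddCommGroup W] [Module k W]
    (φ : V →ₗ[k] W) (b : W) {f : W → k} (hf : f ∈ polyFuns k W) :
    (fun v => f (φ v + b)) ∈ polyFuns k V := by
  induction hf using Algebra.adjoin_induction with
  | mem g hg =>
    obtain ⟨ψ, rfl⟩ := hg
    have hrw : (fun v => (⇑ψ : W → k) (φ v + b)) = ⇑(ψ.comp φ) + (fun _ => ψ b) := by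
      funext v
      simp [LinearMap.comp_apply, map_add]
    rw [hrw]
    refine add_mem (Algebra.subset_adjoin ⟨ψ.comp φ, rfl⟩) ?_
    have hc : (fun _ : V => ψ b) = algebraMap k (V → k) (ψ b) := rfl
    rw [hc]
    exact Subalgebra.algebraMap_mem _ _
  | algebraMap r =>
    have hc : (fun v : V => (algebraMap k (W → k) r) (φ v + b)) = algebraMap k (V → k) r := rfl
    rw [hc]
    exact Subalgebra.algebraMap_mem _ _
  | add g h hg hh ihg ihh =>
    have hrw : (fun v => (g + h) (φ v + b))
        = (fun v => g (φ v + b)) + (fun v => h (φ v + b)) := rfl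
    rw [hrw]
    exact add_mem ihg ihh
  | mul g h hg hh ihg ihh =>
    have hrw : (fun v => (g * h) (φ v + b))
        = (fun v => g (φ v + b)) * (fun v => h (φ v + b)) := rfl
    rw [hrw]
    exact mul_mem ihg ihh

lemma zar_continuous_affine {V W : Type} [AddCommGroup V] [Module k V]
    [AddCommGroup W] [Module k W] (φ : V →ₗ[k] W) (b : W) :
    @Continuous V W (zar k V) (zar k W) (fun v => φ v + b) := by
  refine continuous_generateFrom_iff.mpr ?_
  rintro s ⟨f, hf, rfl⟩
  have hrw : (fun v => φ v + b) ⁻¹' {x | f x ≠ 0} = {v | (fun v => f (φ v + b)) v ≠ 0} := rfl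
  rw [hrw]
  exact TopologicalSpace.GenerateOpen.basic _ ⟨_, polyFuns_comp k φ b hf, rfl⟩

lemma polyFuns_k_eval {f : k → k} (hf : f ∈ polyFuns k k) :
    ∃ q : Polynomial k, ∀ x, f x = q.eval x := by
  induction hf using Algebra.adjoin_induction with
  | mem g hg =>
    obtain ⟨ψ, rfl⟩ := hg
    refine ⟨Polynomial.C (ψ 1) * Polynomial.X, fun x => ?_⟩
    have : ψ x = x * ψ 1 := by
      conv_lhs => rw [show x = x • (1 : k) by simp]
      rw [map_smul, smul_eq_mul]
    rw [this, Polynomial.eval_mul, Polynomial.eval_C, Polynomial.eval_X, mul_comm]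
  | algebraMap r => exact ⟨Polynomial.C r, fun x => by simp [Algebra.algebraMap_eq_smul_one]⟩
  | add g h hg hh ihg ihh =>
    obtain ⟨q1, hq1⟩ := ihg
    obtain ⟨q2, hq2⟩ := ihh
    exact ⟨q1 + q2, fun x => by simp [hq1 x, hq2 x]⟩
  | mul g h hg hh ihg ihh =>
    obtain ⟨q1, hq1⟩ := ihg
    obtain ⟨q2, hq2⟩ := ihh
    exact ⟨q1 * q2, fun x => by simp [hq1 x, hq2 x]⟩

lemma zar_k_open {U : Set k} (hU : @IsOpen k (zar k k) U) : U = ∅ ∨ Uᶜ.Finite := by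
  have hU' : TopologicalSpace.GenerateOpen {U | ∃ f ∈ polyFuns k k, U = {x | f x ≠ 0}} U := hU
  clear hU
  induction hU' with
  | basic s hs =>
    obtain ⟨f, hf, rfl⟩ := hs
    obtain ⟨q, hq⟩ := polyFuns_k_eval k hf
    by_cases h0 : ∀ x, f x = 0
    · left; ext x; simp [h0 x]
    · right
      push_neg at h0
      obtain ⟨x₀, hx₀⟩ := h0
      have hq0 : q ≠ 0 := fun h => hx₀ (by rw [hq, h, Polynomial.eval_zero])
      have hrw : {x : k | f x ≠ 0}ᶜ = {x | q.IsRoot x} := by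
        ext x; simp [hq, Polynomial.IsRoot]
      rw [hrw]
      exact Polynomial.finite_setOf_isRoot hq0
  | univ => right; simp
  | inter s t hs ht ihs iht =>
    rcases ihs with rfl | hs'
    · left; simp
    rcases iht with rfl | ht'
    · left; simp
    · right; rw [Set.compl_inter]; exact hs'.union ht'
  | sUnion S hS ih =>
    by_cases h : ∀ s ∈ S, s = ∅
    · left
      ext x
      simp only [Set.mem_sUnion, Set.mem_empty_iff_false, iff_false, not_exists]
      rintro s ⟨hsS, hxs⟩
      rw [h s hsS] at hxs
      exact hxs
    · push_neg at h
      obtain ⟨s, hsS, hsne⟩ := h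
      rcases ih s hsS with rfl | hfin
      · simp at hsne
      · right
        refine hfin.subset (Set.compl_subset_compl.mpr ?_)
        exact fun x hx => ⟨s, hsS, hx⟩

lemma zar_k_preconn [Infinite k] : @IsPreconnected k (zar k k) Set.univ := by
  intro u v hu hv _ hxu hyv
  obtain ⟨x, _, hxu⟩ := hxu
  obtain ⟨y, _, hyv⟩ := hyv
  rcases zar_k_open k hu with rfl | hu'
  · exact absurd hxu (Set.notMem_empty x)
  rcases zar_k_open k hv with rfl | hv'
  · exact absurd hyv (Set.notMem_empty y)
  have hfin : (u ∩ v)ᶜ.Finite := by rw [Set.compl_inter]; exact hu'.union hv'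
  have hne : (u ∩ v).Nonempty := by
    have := hfin.infinite_compl
    rw [compl_compl] at this
    exact this.nonempty
  obtain ⟨z, hz⟩ := hne
  exact ⟨z, trivial, hz⟩

lemma zar_k_zero_mem [Infinite k] {D : Set k} (hD : @IsClosed k (zar k k) D)
    (h : ∀ s : k, s ≠ 0 → s ∈ D) : (0 : k) ∈ D := by
  by_contra h0
  have hop : @IsOpen k (zar k k) Dᶜ := @IsClosed.isOpen_compl k (zar k k) D hD
  rcases zar_k_open k hop with he | hf
  · have hm : (0:k) ∈ Dᶜ := h0
    rw [he] at hm
    exact hm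
  · rw [compl_compl] at hf
    have hinf : D.Infinite := by
      refine Set.Infinite.mono ?_ ((Set.finite_singleton (0:k)).infinite_compl)
      intro s hs
      exact h s hs
    exact hinf hf

end ZarTop

attribute [local instance] LieRing.ofAssociativeRing

section Sandwich

open ElemAb LieAlgebra

variable {k : Type} [Field k] {L : Type} [LieRing L] [LieAlgebra k L]

lemma thin_sandwich (h2 : (2:k) ≠ 0) {c : L} (hc : (ad k L c)^2 = 0) (y : L) :
    ad k L c * ad k L y * ad k L c = 0 := by
  have hcc : ad k L c * ad k L c = 0 := by rw [← pow_two]; exact hc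
  have h0 : ⁅c, ⁅c, y⁆⁆ = (0:L) := by
    have h := congrFun (congrArg DFunLike.coe hc) y
    rwa [pow_two, Module.End.mul_apply, ad_apply, ad_apply, LinearMap.zero_apply] at h
  have hL : ⁅ad k L c, ⁅ad k L c, ad k L y⁆⁆ = (0 : Module.End k L) := by
    calc ⁅ad k L c, ⁅ad k L c, ad k L y⁆⁆ = ad k L ⁅c, ⁅c, y⁆⁆ := by
          rw [LieHom.map_lie, LieHom.map_lie]
      _ = 0 := by rw [h0]; exact map_zero _
  have e : ⁅ad k L c, ⁅ad k L c, ad k L y⁆⁆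
      = (ad k L c * ad k L c) * ad k L y + ad k L y * (ad k L c * ad k L c)
        - (ad k L c * ad k L y * ad k L c + ad k L c * ad k L y * ad k L c) := by
    simp only [Ring.lie_def]; noncomm_ring
  have e2 := e.symm.trans hL
  rw [hcc, zero_mul, mul_zero, zero_add, zero_sub, neg_eq_zero] at e2
  have e3 : (2:k) • (ad k L c * ad k L y * ad k L c) = 0 := by rw [two_smul]; exact e2
  exact (smul_eq_zero.mp e3).resolve_left h2

lemma sandwich_lie (h2 : (2:k) ≠ 0) {c d : L}
    (hc : c ∈ sandwichSet (k := k) (L := L)) (hd : d ∈ sandwichSet (k := k) (L := L)) :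
    ⁅c, d⁆ ∈ sandwichSet (k := k) (L := L) := by
  have hc' : (ad k L c)^2 = 0 := hc
  have hd' : (ad k L d)^2 = 0 := hd
  have hcc : ad k L c * ad k L c = 0 := by rw [← pow_two]; exact hc'
  have hdd : ad k L d * ad k L d = 0 := by rw [← pow_two]; exact hd'
  have thinA := thin_sandwich h2 hc' d
  have thinB := thin_sandwich h2 hd' c
  show (ad k L ⁅c, d⁆)^2 = 0
  rw [pow_two, LieHom.map_lie, Ring.lie_def]
  have e : (ad k L c * ad k L d - ad k L d * ad k L c)
        * (ad k L c * ad k L d - ad k L d * ad k L c)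
      = (ad k L c * ad k L d * ad k L c) * ad k L d
        - ad k L c * (ad k L d * ad k L d) * ad k L c
        - ad k L d * (ad k L c * ad k L c) * ad k L d
        + (ad k L d * ad k L c * ad k L d) * ad k L c := by noncomm_ring
  rw [e, thinA, thinB, hcc, hdd]
  simp

lemma sandwich_smul {c : L} (hc : c ∈ sandwichSet (k := k) (L := L)) (t : k) :
    t • c ∈ sandwichSet (k := k) (L := L) := by
  show (ad k L (t • c))^2 = 0
  rw [map_smul, smul_pow, (hc : (ad k L c)^2 = 0), smul_zero]

variable {p : ℕ}

lemma expAd_smul_eq (hp3 : 3 ≤ p) {c : L} (hc : c ∈ sandwichSet (k := k) (L := L)) (t : k) :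
    expAd (p := p) (t • c) = 1 + t • ad k L c := by
  have hA : ad k L (t • c) = t • ad k L c := map_smul _ _ _
  have hdef : expAd (p := p) (t • c)
      = ∑ i ∈ Finset.range p, ((i.factorial : k)⁻¹ • (ad k L (t • c)) ^ i) := rfl
  rw [hdef]
  rw [Finset.range_eq_Ico, ← Finset.sum_Ico_consecutive _ (show 0 ≤ 2 by omega)
    (show 2 ≤ p by omega), ← Finset.range_eq_Ico]
  have hzero : ∑ i ∈ Finset.Ico 2 p, ((i.factorial : k)⁻¹ • (ad k L (t • c)) ^ i) = 0 := by
    refine Finset.sum_eq_zero fun i hi => ?_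
    have hi2 : 2 ≤ i := (Finset.mem_Ico.mp hi).1
    rw [hA, smul_pow, show i = 2 + (i - 2) by omega, pow_add, pow_add,
      (hc : (ad k L c)^2 = 0), zero_mul, smul_zero, smul_zero]
  rw [hzero, add_zero, Finset.sum_range_succ, Finset.sum_range_one]
  rw [pow_zero, pow_one, hA]
  simp [Nat.factorial]

end Sandwich

/-- Borel fixed point for the sandwich subgroup. -/
theorem statement10
    (p : ℕ) (hp : p.Prime) (hp3 : 3 ≤ p)
    (k : Type) [Field k] [IsAlgClosed k] [CharP k p]
    (L : Type) [LieRing L] [LieAlgebra k L] [FiniteDimensional k L]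
    (P : pStructure p k L)
    (hexp : ∀ c ∈ sandwichSet (k := k) (L := L), P.IspAut (expAd (p := p) (k := k) c))
    (X : Set L) (hXcl : @IsClosed L (zar k L) X)
    (hXcon : ∀ (t : k), ∀ x ∈ X, t • x ∈ X)
    (hXstab : ∀ f : pAutAll P, f ∈ Gg P → ∀ x ∈ X, f.val x ∈ X)
    (hX0 : (0 : L) ∈ X) (hXne : X ≠ {0}) :
    ∃ x₀ ∈ X, x₀ ≠ (0 : L) ∧ ∀ c ∈ sandwichSet (k := k) (L := L), ⁅c, x₀⁆ = 0 := by
  classical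
  have h2 : (2:k) ≠ 0 := by
    intro h
    have h' : ((2:ℕ):k) = 0 := by exact_mod_cast h
    have hdvd : p ∣ 2 := (CharP.cast_eq_zero_iff k p 2).mp h'
    have := Nat.le_of_dvd (by norm_num) hdvd
    omega
  -- Step A: X is stable under bracketing with sandwich elements
  have hbX : ∀ c ∈ sandwichSet (k := k) (L := L), ∀ x ∈ X, ⁅c, x⁆ ∈ X := by
    intro c hc x hx
    set F : k → pAutAll P :=
      fun t => ⟨expAd (p := p) (t • c), hexp _ (sandwich_smul hc t)⟩ with hF
    have hFval : ∀ t, (F t).1 = 1 + t • LieAlgebra.ad k L c :=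
      fun t => expAd_smul_eq hp3 hc t
    have hFcont : @Continuous k (pAutAll P) (zar k k) (pAutTop P) F := by
      refine (@continuous_induced_rng (pAutAll P) (Module.End k L) k Subtype.val F
        (zar k (Module.End k L)) (zar k k)).mpr ?_
      have hrw : (Subtype.val ∘ F)
          = fun t => (LinearMap.toSpanSingleton k (Module.End k L) (LieAlgebra.ad k L c)) t
            + (1 : Module.End k L) := by
        funext t
        show (F t).1 = _
        rw [hFval t, LinearMap.toSpanSingleton_apply, add_comm]
      show @Continuous k (Module.End k L) (zar k k) (zar k (Module.End k L)) (Subtype.val ∘ F)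
      rw [hrw]
      exact zar_continuous_affine k _ _
    have hFpre : @IsPreconnected (pAutAll P) (pAutTop P) (F '' Set.univ) :=
      @IsPreconnected.image k (pAutAll P) (zar k k) (pAutTop P) _ (zar_k_preconn k) F
        (@Continuous.continuousOn k (pAutAll P) (zar k k) (pAutTop P) _ _ hFcont)
    have hF0 : F 0 = idpAut P := by
      apply Subtype.ext
      rw [hFval 0, zero_smul, add_zero]
      rfl
    have hFt : ∀ t : k, F t ∈ Gg P := by
      intro t
      have hsub := @IsPreconnected.subset_connectedComponent (pAutAll P) (pAutTop P)
        (idpAut P) (F '' Set.univ) hFpre ⟨0, trivial, hF0⟩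
      exact hsub ⟨t, trivial, rfl⟩
    have hline : ∀ t : k, x + t • ⁅c, x⁆ ∈ X := by
      intro t
      have hmem := hXstab (F t) (hFt t) x hx
      have happ : (F t).1 x = x + t • ⁅c, x⁆ := by
        rw [hFval t]
        simp [LieAlgebra.ad_apply]
      rwa [happ] at hmem
    have hshift : ∀ s : k, s ≠ 0 → s • x + ⁅c, x⁆ ∈ X := by
      intro s hs
      have hmem := hXcon s _ (hline s⁻¹)
      rwa [smul_add, smul_smul, mul_inv_cancel₀ hs, one_smul] at hmem
    have hDcl : @IsClosed k (zar k k) ((fun s : k => s • x + ⁅c, x⁆) ⁻¹' X) := by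
      have hcont := zar_continuous_affine k (LinearMap.toSpanSingleton k L x) ⁅c, x⁆
      have hrw : (fun s : k => s • x + ⁅c, x⁆)
          = fun s => (LinearMap.toSpanSingleton k L x) s + ⁅c, x⁆ := by
        funext s
        rw [LinearMap.toSpanSingleton_apply]
      rw [hrw]
      exact @IsClosed.preimage k L (zar k k) (zar k L) _ hcont X hXcl
    have h0D : (0:k) ∈ (fun s : k => s • x + ⁅c, x⁆) ⁻¹' X :=
      zar_k_zero_mem k hDcl (fun s hs => hshift s hs)
    have : (0:k) • x + ⁅c, x⁆ ∈ X := h0D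
    rwa [zero_smul, zero_add] at this
  -- a nonzero element of X
  have hxex : ∃ x ∈ X, x ≠ (0:L) := by
    by_contra hcon
    push_neg at hcon
    exact hXne (Set.eq_singleton_iff_unique_mem.mpr ⟨hX0, hcon⟩)
  obtain ⟨x, hxX, hx0⟩ := hxex
  -- Step B: nilpotency of the sandwich operators
  set SS : Set (Module.End k L) :=
    (fun c => LieAlgebra.ad k L c) '' sandwichSet (k := k) (L := L) with hSS
  have hsq : ∀ a ∈ SS, a * a = 0 := by
    rintro a ⟨c, hc, rfl⟩
    show LieAlgebra.ad k L c * LieAlgebra.ad k L c = 0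
    rw [← pow_two]
    exact hc
  have hbrS : ∀ a ∈ SS, ∀ b ∈ SS, a * b - b * a ∈ SS := by
    rintro a ⟨c, hc, rfl⟩ b ⟨d, hd, rfl⟩
    refine ⟨⁅c, d⁆, sandwich_lie h2 hc hd, ?_⟩
    show LieAlgebra.ad k L ⁅c, d⁆
      = LieAlgebra.ad k L c * LieAlgebra.ad k L d - LieAlgebra.ad k L d * LieAlgebra.ad k L c
    rw [LieHom.map_lie, Ring.lie_def]
  obtain ⟨n, hn0, hnB⟩ := jacobson k SS hsq hbrS
  -- words of length n kill everything
  have hprodzero : ∀ l : List L, (∀ c ∈ l, c ∈ sandwichSet (k := k) (L := L)) →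
      l.length = n → (l.map (LieAlgebra.ad k L)).prod = 0 := by
    intro l hl hlen
    refine list_prod_eq_zero_of_nilp k SS hnB _ ?_ (by rw [List.length_map, hlen])
    intro a ha
    obtain ⟨c, hcl, rfl⟩ := List.mem_map.mp ha
    exact ⟨c, hl c hcl, rfl⟩
  have happly : ∀ (l : List L) (y : L),
      l.foldr (fun c z => ⁅c, z⁆) y = (l.map (LieAlgebra.ad k L)).prod y := by
    intro l
    induction l with
    | nil => intro y; simp
    | cons c l ih =>
      intro y
      rw [List.foldr_cons, List.map_cons, List.prod_cons, Module.End.mul_apply, ih y,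
        LieAlgebra.ad_apply]
  have hkill : ∀ l : List L, (∀ c ∈ l, c ∈ sandwichSet (k := k) (L := L)) → l.length = n →
      ∀ y : L, l.foldr (fun c z => ⁅c, z⁆) y = 0 := by
    intro l hl hlen y
    rw [happly l y, hprodzero l hl hlen]
    simp
  -- descent
  have hdesc : ∀ (j : ℕ) (y : L), y ∈ X → y ≠ 0 →
      (∀ l : List L, (∀ c ∈ l, c ∈ sandwichSet (k := k) (L := L)) → l.length = j →
        l.foldr (fun c z => ⁅c, z⁆) y = 0) →
      ∃ x₀ ∈ X, x₀ ≠ (0:L) ∧ ∀ c ∈ sandwichSet (k := k) (L := L), ⁅c, x₀⁆ = 0 := by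
    intro j
    induction j with
    | zero =>
      intro y hyX hy0 hall
      exact absurd (hall [] (by simp) rfl) hy0
    | succ j ih =>
      intro y hyX hy0 hall
      by_cases hcase : ∀ c ∈ sandwichSet (k := k) (L := L), ⁅c, y⁆ = 0
      · exact ⟨y, hyX, hy0, hcase⟩
      · push_neg at hcase
        obtain ⟨c, hcS, hcy⟩ := hcase
        refine ih ⁅c, y⁆ (hbX c hcS y hyX) hcy ?_
        intro l hl hlen
        have hfold := hall (l ++ [c]) ?_ (by simp [hlen])
        · rw [List.foldr_append] at hfold
          simpa using hfold
        · intro d hd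
          rcases List.mem_append.mp hd with hd | hd
          · exact hl d hd
          · rw [List.mem_singleton.mp hd]
            exact hcS
  exact hdesc n x hxX hx0 (fun l hl hlen => hkill l hl hlen x)
end
end

section
/- Let V be a finite-dimensional k-vector space, W ⊆ V a subspace, and U ⊆ P(V) a locally closed subset such that U ∩ P(W) is non-empty and open in P(W). If φ : U → P^m is a homogeneous morphism with defining system (f₀, …, f_m) consisting of homogeneous polynomials of degree d on V, then deg(φ|_{U ∩ P(W)}) = d − deg(gcd(f₀|_W, …, f_m|_W)). -/
noncomputable section

namespace ElemAb

variable (p : ℕ) (k : Type) [Field k]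

variable (L : Type) [LieRing L] [LieAlgebra k L]

variable {p k L}

section Proj

variable (k)

/-- The Zariski topology on the projective space `P(V)`, as the quotient topology from the
punctured affine space. -/
def projTop (V : Type) [AddCommGroup V] [Module k V] : TopologicalSpace (Projectivization k V) :=
  TopologicalSpace.coinduced (Projectivization.mk' k)
    (TopologicalSpace.induced Subtype.val (zar k V))

variable {k}

variable {V : Type} [AddCommGroup V] [Module k V] [FiniteDimensional k V]

/-- Evaluation of a polynomial at the coordinates of `x` with respect to a fixed basis:
this realizes `MvPolynomial (Fin (dim V)) k` as the algebra `S(V^*)` of polynomial functions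
on `V`. -/
def polyEval (f : MvPolynomial (Fin (Module.finrank k V)) k) (x : V) : k :=
  MvPolynomial.eval (fun i => (Module.finBasis k V).repr x i) f

/-- The restriction homomorphism `S(V^*) → S(W^*)` for a subspace `W ⊆ V` (in coordinates). -/
def resW (W : Submodule k V) :
    MvPolynomial (Fin (Module.finrank k V)) k →ₐ[k]
      MvPolynomial (Fin (Module.finrank k ↥W)) k :=
  MvPolynomial.aeval (fun i => ∑ j : Fin (Module.finrank k ↥W),
    MvPolynomial.C ((Module.finBasis k V).repr ((Module.finBasis k ↥W j : ↥W) : V) i) *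
      MvPolynomial.X j)

variable (k) in
/-- The subset of `P(V)` determined by a subset `S ⊆ V`, as a type. -/
def projOf (S : Set V) : Type :=
  {q : Projectivization k V // ∃ x, ∃ hx : x ≠ 0, x ∈ S ∧ Projectivization.mk k x hx = q}

/-- `φ : P(S) → P^m` is a morphism of varieties: locally around every point it is given by a
system of homogeneous polynomials of a common degree. -/
def IsMorphismOn (S : Set V) (m : ℕ)
    (φ : projOf k S → Projectivization k (Fin (m + 1) → k)) : Prop :=
  ∀ q0 : projOf k S, ∃ U : Set (projOf k S),
    @IsOpen _ (TopologicalSpace.induced Subtype.val (projTop k V)) U ∧ q0 ∈ U ∧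
    ∃ (d : ℕ) (F : Fin (m + 1) → MvPolynomial (Fin (Module.finrank k V)) k),
      (∀ i, (F i).IsHomogeneous d) ∧
      ∀ (x : V) (hx : x ≠ 0) (q : projOf k S), q ∈ U →
        q.1 = Projectivization.mk k x hx →
        ∃ hF : (fun i => polyEval (F i) x) ≠ 0,
          φ q = Projectivization.mk k (fun i => polyEval (F i) x) hF

/-- The degree `deg (φ|_{P(v)})` of the restriction of `φ` to the projective line of a
two-dimensional subspace `v`: the common degree of a reduced homogeneous defining system of
`φ|_{P(v)}` in the coordinates of a basis of `v`. -/
noncomputable def planeDeg {S : Set V} (m : ℕ)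
    (φ : projOf k S → Projectivization k (Fin (m + 1) → k)) (v : Submodule k V) : ℕ :=
  sSup {d | ∃ u w : V, u ∈ v ∧ w ∈ v ∧ LinearIndependent k ![u, w] ∧
    ∃ F : Fin (m + 1) → MvPolynomial (Fin 2) k,
      (∀ i, (F i).IsHomogeneous d) ∧
      (∀ h : MvPolynomial (Fin 2) k, (∀ i, h ∣ F i) → IsUnit h) ∧
      ∀ (s t : k) (hx : s • u + t • w ≠ 0) (q : projOf k S),
        q.1 = Projectivization.mk k (s • u + t • w) hx →
        ∃ hF : (fun i => MvPolynomial.eval (![s, t] : Fin 2 → k) (F i)) ≠ 0,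
          φ q = Projectivization.mk k (fun i => MvPolynomial.eval (![s, t] : Fin 2 → k) (F i)) hF}

end Proj
end ElemAb

open ElemAb

/-!
Restricted to `W`, the `fᵢ` stay homogeneous of degree `d` and still define `φ` on `U ∩ P(W)`.
Divide them by a homogeneous common divisor `h` of greatest degree `r`. The quotients have
degree `d - r` and still define `φ`, since `h` cannot vanish where the `fᵢ|_W` have no common
zero. They are reduced: a common divisor `g` of the quotients divides a nonzero homogeneous
polynomial, hence is homogeneous, so `h * g` is a homogeneous common divisor of the `fᵢ|_W`, and
maximality of `r` forces `g` to be a nonzero constant.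
-/

namespace MvPolynomial

variable {ι σ R K : Type*} [CommSemiring R]

theorem IsHomogeneous.le_order_coe {p : MvPolynomial σ R} {n : ℕ} (hp : p.IsHomogeneous n) :
    (n : ℕ∞) ≤ (p : MvPowerSeries σ R).order :=
  MvPowerSeries.nat_le_order fun d hd => by
    rw [coeff_coe]
    exact hp.coeff_eq_zero hd.ne

theorem degree_le_totalDegree {p : MvPolynomial σ R} {d : σ →₀ ℕ} (hd : coeff d p ≠ 0) :
    d.degree ≤ p.totalDegree :=
  le_totalDegree (mem_support_iff.mpr hd)

theorem order_coe_le_totalDegree {p : MvPolynomial σ R} (hp : p ≠ 0) :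
    (p : MvPowerSeries σ R).order ≤ p.totalDegree := by
  obtain ⟨d, hd⟩ := ne_zero_iff.mp hp
  calc (p : MvPowerSeries σ R).order
      ≤ d.degree := MvPowerSeries.order_le (by rwa [coeff_coe])
    _ ≤ p.totalDegree := by exact_mod_cast degree_le_totalDegree hd

theorem isHomogeneous_totalDegree_of_totalDegree_le_order {p : MvPolynomial σ R}
    (hp : (p.totalDegree : ℕ∞) ≤ (p : MvPowerSeries σ R).order) :
    p.IsHomogeneous p.totalDegree := by
  intro d hd
  rw [Pi.one_def, ← Finsupp.degree_eq_weight_one]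
  refine le_antisymm (degree_le_totalDegree hd) ?_
  have := hp.trans (MvPowerSeries.order_le (f := (p : MvPowerSeries σ R)) (d := d)
    (by rwa [coeff_coe]))
  exact_mod_cast this

variable [NoZeroDivisors R]

/-- Order and total degree are both additive, and they agree exactly on homogeneous polynomials. -/
theorem IsHomogeneous.isHomogeneous_totalDegree_of_dvd {p a : MvPolynomial σ R} {n : ℕ}
    (hp : p.IsHomogeneous n) (hp0 : p ≠ 0) (ha : a ∣ p) : a.IsHomogeneous a.totalDegree := by
  obtain ⟨b, rfl⟩ := ha
  obtain ⟨ha0, hb0⟩ := mul_ne_zero_iff.mp hp0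
  apply isHomogeneous_totalDegree_of_totalDegree_le_order
  have hn : n = a.totalDegree + b.totalDegree := by
    rw [← hp.totalDegree hp0, totalDegree_mul_of_isDomain ha0 hb0]
  have hsum := hp.le_order_coe
  rw [coe_mul, MvPowerSeries.order_mul, hn] at hsum
  have hb := order_coe_le_totalDegree hb0
  have ha := order_coe_le_totalDegree ha0
  lift (a : MvPowerSeries σ R).order to ℕ using (ha.trans_lt (ENat.natCast_lt_top _)).ne with oa hoa
  lift (b : MvPowerSeries σ R).order to ℕ using (hb.trans_lt (ENat.natCast_lt_top _)).ne with ob hob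
  norm_cast at *
  omega

theorem IsHomogeneous.of_mul_left {p q : MvPolynomial σ R} {m n : ℕ}
    (hpq : (p * q).IsHomogeneous n) (hp : p.IsHomogeneous m) (hp0 : p ≠ 0) :
    q.IsHomogeneous (n - m) := by
  rcases eq_or_ne q 0 with rfl | hq0
  · exact isHomogeneous_zero _ _ _
  have hn : n = m + q.totalDegree := by
    rw [← hpq.totalDegree (mul_ne_zero hp0 hq0), totalDegree_mul_of_isDomain hp0 hq0,
      hp.totalDegree hp0]
  rw [hn, Nat.add_sub_cancel_left]
  exact hpq.isHomogeneous_totalDegree_of_dvd (mul_ne_zero hp0 hq0) (dvd_mul_left q p)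

/-- Its greatest element is the degree of the greatest common divisor of the family. -/
def homogeneousCommonDivisorDegrees (G : ι → MvPolynomial σ R) : Set ℕ :=
  {r | ∃ h : MvPolynomial σ R, h ≠ 0 ∧ h.IsHomogeneous r ∧ ∀ i, h ∣ G i}

theorem exists_isGreatest_homogeneousCommonDivisorDegrees [Nontrivial R]
    {G : ι → MvPolynomial σ R} {i₀ : ι} (hG : G i₀ ≠ 0) : ∃ r, IsGreatest (homogeneousCommonDivisorDegrees G) r := by
  have hbdd : BddAbove (homogeneousCommonDivisorDegrees G) := by
    refine ⟨(G i₀).totalDegree, fun r ⟨h, h0, hh, hdvd⟩ => ?_⟩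
    rw [← hh.totalDegree h0]
    exact totalDegree_le_of_dvd_of_isDomain (hdvd i₀) hG
  have hzero : 0 ∈ homogeneousCommonDivisorDegrees G :=
    ⟨1, one_ne_zero, isHomogeneous_one _ _, fun _ => one_dvd _⟩
  exact ⟨_, Nat.sSup_mem ⟨0, hzero⟩ hbdd, fun _ hr => le_csSup hbdd hr⟩

variable [Field K]

theorem isUnit_of_forall_dvd_cofactor {G F : ι → MvPolynomial σ K} {h g : MvPolynomial σ K}
    {r n : ℕ} {i₀ : ι} (hr : r ∈ upperBounds (homogeneousCommonDivisorDegrees G))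
    (hh : h.IsHomogeneous r) (hh0 : h ≠ 0) (hGF : ∀ i, G i = h * F i)
    (hF : (F i₀).IsHomogeneous n) (hF0 : F i₀ ≠ 0) (hg : ∀ i, g ∣ F i) : IsUnit g := by
  have hg0 : g ≠ 0 := ne_zero_of_dvd_ne_zero hF0 (hg i₀)
  have hgh : g.IsHomogeneous g.totalDegree := hF.isHomogeneous_totalDegree_of_dvd hF0 (hg i₀)
  have : r + g.totalDegree ≤ r :=
    hr ⟨h * g, mul_ne_zero hh0 hg0, hh.mul hgh, fun i => hGF i ▸ mul_dvd_mul_left h (hg i)⟩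
  have hgC : g = C (coeff 0 g) := totalDegree_eq_zero_iff_eq_C.mp (by omega)
  rw [hgC] at hg0 ⊢
  exact (IsUnit.mk0 _ fun h0 => hg0 (by rw [h0, C_0])).map C

theorem exists_reduced_cofactors {G : ι → MvPolynomial σ K} {d : ℕ} {i₀ : ι}
    (hG : ∀ i, (G i).IsHomogeneous d) (hG0 : G i₀ ≠ 0) :
    ∃ r, IsGreatest (homogeneousCommonDivisorDegrees G) r ∧
      ∃ (h : MvPolynomial σ K) (F : ι → MvPolynomial σ K),
        (∀ i, G i = h * F i) ∧ (∀ i, (F i).IsHomogeneous (d - r)) ∧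
        ∀ g, (∀ i, g ∣ F i) → IsUnit g := by
  obtain ⟨r, hr⟩ := exists_isGreatest_homogeneousCommonDivisorDegrees hG0
  obtain ⟨h, hh0, hh, hdvd⟩ := hr.1
  choose F hGF using hdvd
  have hF : ∀ i, (F i).IsHomogeneous (d - r) := fun i =>
    IsHomogeneous.of_mul_left (hGF i ▸ hG i) hh hh0
  have hF0 : F i₀ ≠ 0 := right_ne_zero_of_mul (hGF i₀ ▸ hG0)
  exact ⟨r, hr, h, F, hGF, hF, fun g hg => isUnit_of_forall_dvd_cofactor hr.2 hh hh0 hGF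
    (hF i₀) hF0 hg⟩

end MvPolynomial

theorem Projectivization.exists_mk_eq_of_eq_smul {K V : Type*} [DivisionRing K] [AddCommGroup V]
    [Module K V] {v w : V} (a : K) (hv : v ≠ 0) (hvw : v = a • w) :
    ∃ hw : w ≠ 0, Projectivization.mk K v hv = Projectivization.mk K w hw := by
  have hw : w ≠ 0 := by rintro rfl; exact hv (by rw [hvw, smul_zero])
  exact ⟨hw, (Projectivization.mk_eq_mk_iff' K v w hv hw).mpr ⟨a, hvw.symm⟩⟩

namespace ElemAb

variable {k : Type} [Field k] {V : Type} [AddCommGroup V] [Module k V] [FiniteDimensional k V]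

open MvPolynomial

theorem eval_resW (W : Submodule k V) (f : MvPolynomial (Fin (Module.finrank k V)) k) (y : W) :
    eval (fun j => (Module.finBasis k W).repr y j) (resW W f) = polyEval f (y : V) := by
  rw [← aeval_eq_eval, resW, ← AlgHom.comp_apply, comp_aeval, polyEval, ← aeval_eq_eval]
  congr 2 with i
  conv_rhs => rw [← (Module.finBasis k W).sum_repr y]
  simp only [map_sum, map_mul, aeval_C, aeval_X, Algebra.algebraMap_self, RingHom.id_apply,
    Submodule.coe_sum, Submodule.coe_smul, map_smul, Finsupp.coe_finsetSum, Finset.sum_apply,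
    Finsupp.smul_apply, smul_eq_mul]
  exact Finset.sum_congr rfl fun j _ => mul_comm _ _

theorem _root_.MvPolynomial.IsHomogeneous.resW {f : MvPolynomial (Fin (Module.finrank k V)) k}
    {n : ℕ} (hf : f.IsHomogeneous n) (W : Submodule k V) : (resW W f).IsHomogeneous n := by
  rw [← one_mul n]
  exact hf.aeval _ fun i => IsHomogeneous.sum _ _ _ fun j _ => (isHomogeneous_X k j).C_mul _

end ElemAb

theorem statement15_general
    (k : Type) [Field k]
    (V : Type) [AddCommGroup V] [Module k V] [FiniteDimensional k V]
    (W : Submodule k V)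
    (U : Set (Projectivization k V))
    (hne : (U ∩ {q | ∃ x, ∃ hx : x ≠ 0, x ∈ W ∧ Projectivization.mk k x hx = q}).Nonempty)
    (m : ℕ) (φ : ↥U → Projectivization k (Fin (m + 1) → k))
    (d : ℕ) (F : Fin (m + 1) → MvPolynomial (Fin (Module.finrank k V)) k)
    (hFhom : ∀ i, (F i).IsHomogeneous d)
    -- `F` is a defining system for the homogeneous morphism `φ` on `U`
    (hrep : ∀ (x : V) (hx : x ≠ 0) (q : ↥U),
      (q : Projectivization k V) = Projectivization.mk k x hx →
      ∃ hF : (fun i => polyEval (F i) x) ≠ 0,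
        φ q = Projectivization.mk k (fun i => polyEval (F i) x) hF) :
    ∃ r : ℕ,
      -- `r` is the degree of `gcd (f₀|_W, …, f_m|_W)`: there is a common homogeneous divisor
      -- of degree `r` of the restrictions, and no one of larger degree
      (∃ h : MvPolynomial (Fin (Module.finrank k ↥W)) k, h ≠ 0 ∧ h.IsHomogeneous r ∧
        ∀ i, h ∣ resW W (F i)) ∧
      (∀ r' : ℕ, (∃ h : MvPolynomial (Fin (Module.finrank k ↥W)) k,
        h ≠ 0 ∧ h.IsHomogeneous r' ∧ ∀ i, h ∣ resW W (F i)) → r' ≤ r) ∧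
      -- and `φ|_{U ∩ P(W)}` has degree `d − r`: it admits a reduced homogeneous defining
      -- system of degree `d − r` in the coordinates of `W`
      (∃ Fw : Fin (m + 1) → MvPolynomial (Fin (Module.finrank k ↥W)) k,
        (∀ i, (Fw i).IsHomogeneous (d - r)) ∧
        (∀ h : MvPolynomial (Fin (Module.finrank k ↥W)) k, (∀ i, h ∣ Fw i) → IsUnit h) ∧
        ∀ (y : ↥W) (hy : (y : V) ≠ 0) (q : ↥U),
          (q : Projectivization k V) = Projectivization.mk k (y : V) hy →
          ∃ hF : (fun i => MvPolynomial.eval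
              (fun j => (Module.finBasis k ↥W).repr y j) (Fw i)) ≠ 0,
            φ q = Projectivization.mk k
              (fun i => MvPolynomial.eval (fun j => (Module.finBasis k ↥W).repr y j) (Fw i))
              hF) := by
  obtain ⟨i₀, hi₀⟩ : ∃ i, resW W (F i) ≠ 0 := by
    obtain ⟨q, hqU, x, hx, hxW, rfl⟩ := hne
    obtain ⟨i, hi⟩ := Function.ne_iff.mp (hrep x hx ⟨_, hqU⟩ rfl).1
    refine ⟨i, fun h0 => hi ?_⟩
    rw [Pi.zero_apply, ← eval_resW W (F i) ⟨x, hxW⟩, h0, map_zero]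
  obtain ⟨r, hr, h, Fw, hGF, hFw, hred⟩ :=
    MvPolynomial.exists_reduced_cofactors (fun i => (hFhom i).resW W) hi₀
  refine ⟨r, hr.1, fun r' hr' => hr.2 hr', Fw, hFw, hred, fun y hy q hq => ?_⟩
  obtain ⟨hFy, hφ⟩ := hrep y hy q hq
  let c : Fin (Module.finrank k W) → k := fun j => (Module.finBasis k W).repr y j
  have hFc : (fun i => polyEval (F i) (y : V)) = MvPolynomial.eval c h • fun i =>
      MvPolynomial.eval c (Fw i) :=
    funext fun i => by rw [← eval_resW, hGF i, map_mul, Pi.smul_apply, smul_eq_mul]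
  obtain ⟨hFwy, hmk⟩ := Projectivization.exists_mk_eq_of_eq_smul _ hFy hFc
  exact ⟨hFwy, hφ.trans hmk⟩

/-- Let `W ⊆ V` be a subspace and `U ⊆ P(V)` locally closed with
`U ∩ P(W)` nonempty and open in `P(W)`.  If `φ : U → P^m` is a homogeneous morphism with
defining system `(f₀, …, f_m)` of homogeneous polynomials of degree `d`, then
`deg (φ|_{U ∩ P(W)}) = d − deg (gcd (f₀|_W, …, f_m|_W))`. -/
theorem statement15
    (k : Type) [Field k] [IsAlgClosed k]
    (V : Type) [AddCommGroup V] [Module k V] [FiniteDimensional k V]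
    (W : Submodule k V)
    (U : Set (Projectivization k V)) (hU : @IsLocallyClosed _ (projTop k V) U)
    (hne : (U ∩ {q | ∃ x, ∃ hx : x ≠ 0, x ∈ W ∧ Projectivization.mk k x hx = q}).Nonempty)
    (hopen : ∃ O : Set (Projectivization k V), @IsOpen _ (projTop k V) O ∧
      U ∩ {q | ∃ x, ∃ hx : x ≠ 0, x ∈ W ∧ Projectivization.mk k x hx = q} =
        O ∩ {q | ∃ x, ∃ hx : x ≠ 0, x ∈ W ∧ Projectivization.mk k x hx = q})
    (m : ℕ) (φ : ↥U → Projectivization k (Fin (m + 1) → k))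
    (d : ℕ) (F : Fin (m + 1) → MvPolynomial (Fin (Module.finrank k V)) k)
    (hFhom : ∀ i, (F i).IsHomogeneous d)
    -- `F` is a defining system for the homogeneous morphism `φ` on `U`
    (hrep : ∀ (x : V) (hx : x ≠ 0) (q : ↥U),
      (q : Projectivization k V) = Projectivization.mk k x hx →
      ∃ hF : (fun i => polyEval (F i) x) ≠ 0,
        φ q = Projectivization.mk k (fun i => polyEval (F i) x) hF) :
    ∃ r : ℕ,
      -- `r` is the degree of `gcd (f₀|_W, …, f_m|_W)`: there is a common homogeneous divisor
      -- of degree `r` of the restrictions, and no one of larger degree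
      (∃ h : MvPolynomial (Fin (Module.finrank k ↥W)) k, h ≠ 0 ∧ h.IsHomogeneous r ∧
        ∀ i, h ∣ resW W (F i)) ∧
      (∀ r' : ℕ, (∃ h : MvPolynomial (Fin (Module.finrank k ↥W)) k,
        h ≠ 0 ∧ h.IsHomogeneous r' ∧ ∀ i, h ∣ resW W (F i)) → r' ≤ r) ∧
      -- and `φ|_{U ∩ P(W)}` has degree `d − r`: it admits a reduced homogeneous defining
      -- system of degree `d − r` in the coordinates of `W`
      (∃ Fw : Fin (m + 1) → MvPolynomial (Fin (Module.finrank k ↥W)) k,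
        (∀ i, (Fw i).IsHomogeneous (d - r)) ∧
        (∀ h : MvPolynomial (Fin (Module.finrank k ↥W)) k, (∀ i, h ∣ Fw i) → IsUnit h) ∧
        ∀ (y : ↥W) (hy : (y : V) ≠ 0) (q : ↥U),
          (q : Projectivization k V) = Projectivization.mk k (y : V) hy →
          ∃ hF : (fun i => MvPolynomial.eval
              (fun j => (Module.finBasis k ↥W).repr y j) (Fw i)) ≠ 0,
            φ q = Projectivization.mk k
              (fun i => MvPolynomial.eval (fun j => (Module.finBasis k ↥W).repr y j) (Fw i))
              hF) :=
  statement15_general k V W U hne m φ d F hFhom hrep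
end
end
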